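/- Let Θ be a nonempty closed convex subset of ℝ^d, let Z be a metric space with its Borel σ-algebra, let ℓ : Z × ℝ^d → ℝ, let γ, β > 0 and ω, ε > 0 with ωε < γ/β, and for each θ ∈ Θ let P_θ be a Borel probability measure on Z (the worst-case distribution of the distributionally robust objective at θ). Assume: (i) for each θ ∈ Θ, the map ξ ↦ E_{Z∼P_θ}[ℓ(Z; ξ)] is differentiable and γ-strongly convex on Θ, with gradient equal to ξ ↦ E_{Z∼P_θ}[∇_ξ ℓ(Z; ξ)], where for each ξ the map z ↦ ∇_ξ ℓ(z; ξ) is integrable with respect to every P_θ; (ii) for each ξ ∈ Θ, the map z ↦ ∇_ξ ℓ(z; ξ) is β-Lipschitz; (iii) the family (P_θ)_{θ∈Θ} is (ωε)-sensitive in dual (Kantorovich–Rubinstein) form. Let G : Θ → Θ be such that for every θ ∈ Θ, G(θ) minimizes ξ ↦ E_{Z∼P_θ}[ℓ(Z; ξ)] over Θ. Then there is a unique θ_PS ∈ Θ with G(θ_PS) = θ_PS, and for any θ₀ ∈ Θ with θ₀ ≠ θ_PS, the iterates θ_{t+1} = G(θ_t) satisfy ‖θ_t − θ_PS‖ ≤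 δ for every δ > 0 and every natural number t ≥ (1 − ωεβ/γ)⁻¹ · log(‖θ₀ − θ_PS‖/δ). -/

import Mathlib

/-!
The robust objective `J_θ ξ = ∫ ℓ(z, ξ) dP_θ` is `γ`-strongly convex, so its minimiser `G θ`
satisfies quadratic growth. Adding the growth inequalities of `J_θ` at `G θ'` and of `J_θ'` at
`G θ` bounds `γ ‖G θ - G θ'‖²` by the increment of `J_θ - J_θ'` between the two minimisers. The
gradient of `J_θ - J_θ'` is the difference of the integrals of the `β`-Lipschitz map
`z ↦ ∇ℓ(z, ξ)` under `P_θ` and `P_θ'`, which dual sensitivity (tested against `⟪v, ·⟫`) bounds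
by `β ω ε ‖θ - θ'‖`. By the mean value theorem `G` is therefore a contraction of ratio
`c = ω ε β / γ < 1` on the closed set `Θ`, and Banach's fixed-point theorem gives the stable
point together with `‖θ_t - θ_PS‖ ≤ c ^ t ‖θ₀ - θ_PS‖ ≤ exp (-(1 - c) t) ‖θ₀ - θ_PS‖`.
-/

open MeasureTheory Filter Topology Set Function
open scoped RealInnerProductSpace

section DualSensitivity

variable {ι Z : Type*} [SeminormedAddCommGroup ι] [PseudoMetricSpace Z] [MeasurableSpace Z]

def IsDualSensitiveOn (P : ι → Measure Z) (S : Set ι) (s : ℝ) : Prop :=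
  ∀ g : Z → ℝ, LipschitzWith 1 g → (∀ θ ∈ S, Integrable g (P θ)) →
    ∀ θ ∈ S, ∀ θ' ∈ S, |(∫ z, g z ∂(P θ)) - ∫ z, g z ∂(P θ')| ≤ s * ‖θ - θ'‖

variable {P : ι → Measure Z} {S : Set ι} {s : ℝ} {θ θ' : ι}

theorem IsDualSensitiveOn.abs_integral_sub_le (hP : IsDualSensitiveOn P S s) {g : Z → ℝ}
    {K : ℝ} (hK : 0 < K) (hg : ∀ z z', |g z - g z'| ≤ K * dist z z')
    (hint : ∀ θ ∈ S, Integrable g (P θ)) (hθ : θ ∈ S) (hθ' : θ' ∈ S) :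
    |(∫ z, g z ∂(P θ)) - ∫ z, g z ∂(P θ')| ≤ K * (s * ‖θ - θ'‖) := by
  have hlip : LipschitzWith 1 fun z => K⁻¹ * g z := LipschitzWith.of_dist_le_mul fun z z' => by
    rw [Real.dist_eq, ← mul_sub, abs_mul, abs_of_pos (inv_pos.2 hK), NNReal.coe_one, one_mul,
      inv_mul_le_iff₀ hK]
    exact hg z z'
  have h := hP _ hlip (fun θ hθ => (hint θ hθ).const_mul _) θ hθ θ' hθ'
  rw [integral_const_mul, integral_const_mul, ← mul_sub, abs_mul, abs_of_pos (inv_pos.2 hK)] at h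
  exact (inv_mul_le_iff₀ hK).1 h

theorem IsDualSensitiveOn.norm_integral_sub_le {E : Type*} [NormedAddCommGroup E]
    [InnerProductSpace ℝ E] [CompleteSpace E] (hP : IsDualSensitiveOn P S s) {F : Z → E}
    {β : ℝ} (hβ : 0 < β) (hF : ∀ z z', ‖F z - F z'‖ ≤ β * dist z z')
    (hint : ∀ θ ∈ S, Integrable F (P θ)) (hθ : θ ∈ S) (hθ' : θ' ∈ S) :
    ‖(∫ z, F z ∂(P θ)) - ∫ z, F z ∂(P θ')‖ ≤ β * (s * ‖θ - θ'‖) := by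
  set v := (∫ z, F z ∂(P θ)) - ∫ z, F z ∂(P θ')
  rcases eq_or_ne v 0 with hv | hv
  · have h0 := hP 0 (LipschitzWith.const' 0) (fun _ _ => integrable_zero _ _ _) θ hθ θ' hθ'
    simp only [Pi.zero_apply, integral_zero, sub_zero, abs_zero] at h0
    rw [hv, norm_zero]
    exact mul_nonneg hβ.le h0
  have hvpos : 0 < ‖v‖ := norm_pos_iff.2 hv
  have h := hP.abs_integral_sub_le (g := fun z => ⟪v, F z⟫) (mul_pos hvpos hβ)
    (fun z z' => by
      rw [← inner_sub_right, mul_assoc]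
      exact (abs_real_inner_le_norm _ _).trans (by gcongr; exact hF z z'))
    (fun θ hθ => (hint θ hθ).const_inner v) hθ hθ'
  rw [integral_inner (hint θ hθ), integral_inner (hint θ' hθ'), ← inner_sub_right,
    real_inner_self_eq_norm_sq, abs_of_nonneg (sq_nonneg _), sq, mul_assoc] at h
  exact le_of_mul_le_mul_left h hvpos

end DualSensitivity

section Minimizers

variable {E : Type*} [NormedAddCommGroup E] [InnerProductSpace ℝ E] {s : Set E} {x y : E}

theorem UniformConvexOn.add_le_of_isMinOn {φ : ℝ → ℝ} {f : E → ℝ} (hf : UniformConvexOn s φ f)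
    (hmin : IsMinOn f s x) (hx : x ∈ s) (hy : y ∈ s) : f x + φ ‖x - y‖ ≤ f y := by
  have hseg : ∀ t ∈ Ioo (0 : ℝ) 1, f x + φ ‖x - y‖ - f y ≤ t * φ ‖x - y‖ := by
    rintro t ⟨ht0, ht1⟩
    have hconv := hf.2 hx hy (sub_nonneg.2 ht1.le) ht0.le (sub_add_cancel 1 t)
    have hle : f x ≤ f ((1 - t) • x + t • y) := hmin (hf.1 hx hy (sub_nonneg.2 ht1.le) ht0.le
      (sub_add_cancel 1 t))
    simp only [smul_eq_mul] at hconv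
    have hmul : t * (f x + φ ‖x - y‖ - f y) ≤ t * (t * φ ‖x - y‖) := by linarith
    exact le_of_mul_le_mul_left hmul ht0
  have hlim : Tendsto (fun t : ℝ => t * φ ‖x - y‖) (𝓝[>] 0) (𝓝 0) :=
    tendsto_nhdsWithin_of_tendsto_nhds <| by
      simpa using (tendsto_id (x := 𝓝 (0 : ℝ))).mul_const (φ ‖x - y‖)
  have := ge_of_tendsto hlim (eventually_of_mem (Ioo_mem_nhdsGT one_pos) hseg)
  linarith

theorem gradient_sub [CompleteSpace E] {f g : E → ℝ}
    (hf : DifferentiableAt ℝ f x) (hg : DifferentiableAt ℝ g x) :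
    gradient (f - g) x = gradient f x - gradient g x := by
  simp only [gradient, fderiv_sub hf hg, map_sub]

theorem StrongConvexOn.norm_sub_le_of_isMinOn [CompleteSpace E] {m K : ℝ} {f g : E → ℝ}
    (hm : 0 < m) (hf : StrongConvexOn s m f) (hg : StrongConvexOn s m g)
    (hfd : ∀ z ∈ s, DifferentiableAt ℝ f z) (hgd : ∀ z ∈ s, DifferentiableAt ℝ g z)
    (hK : ∀ z ∈ s, ‖gradient f z - gradient g z‖ ≤ K)
    (hfx : IsMinOn f s x) (hgy : IsMinOn g s y) (hx : x ∈ s) (hy : y ∈ s) :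
    ‖x - y‖ ≤ K / m := by
  have hgrowth_f : f x + m / 2 * ‖x - y‖ ^ 2 ≤ f y := hf.add_le_of_isMinOn hfx hx hy
  have hgrowth_g : g y + m / 2 * ‖y - x‖ ^ 2 ≤ g x := hg.add_le_of_isMinOn hgy hy hx
  have hmv : ‖(f - g) y - (f - g) x‖ ≤ K * ‖y - x‖ :=
    hf.1.norm_image_sub_le_of_norm_fderiv_le (fun z hz => (hfd z hz).sub (hgd z hz))
      (fun z hz => by
        rw [← (InnerProductSpace.toDual ℝ E).symm.norm_map]
        exact (congrArg norm (gradient_sub (hfd z hz) (hgd z hz))).trans_le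
          (hK z hz))
      hx hy
  rw [norm_sub_rev y x] at hgrowth_g hmv
  have hK0 : 0 ≤ K := (norm_nonneg _).trans (hK x hx)
  have key : m * ‖x - y‖ ^ 2 ≤ K * ‖x - y‖ := by
    simp only [Pi.sub_apply, Real.norm_eq_abs] at hmv
    linarith [le_abs_self ((f y - g y) - (f x - g x))]
  rw [le_div_iff₀ hm]
  rcases (norm_nonneg (x - y)).eq_or_lt with h0 | hpos
  · rw [← h0]; simpa using hK0
  · nlinarith

end Minimizers

theorem exists_isFixedPt_dist_iterate_le_of_contraction {X : Type*} [MetricSpace X] {s : Set X}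
    (hsc : IsComplete s) (hne : s.Nonempty) {f : X → X} (hsf : MapsTo f s s) {c : ℝ}
    (hc0 : 0 ≤ c) (hc1 : c < 1) (hf : ∀ x ∈ s, ∀ y ∈ s, dist (f x) (f y) ≤ c * dist x y) :
    ∃ p ∈ s, IsFixedPt f p ∧ (∀ q ∈ s, IsFixedPt f q → q = p) ∧
      ∀ x ∈ s, ∀ n : ℕ, dist (f^[n] x) p ≤ c ^ n * dist x p := by
  lift c to NNReal using hc0
  have hcontr : ContractingWith c (hsf.restrict f s s) :=
    ⟨by exact_mod_cast hc1, LipschitzWith.of_dist_le_mul fun x y => hf x x.2 y y.2⟩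
  obtain ⟨x₀, hx₀⟩ := hne
  obtain ⟨p, hp, hfix, -⟩ := hcontr.exists_fixedPoint' hsc hsf hx₀ (edist_ne_top _ _)
  refine ⟨p, hp, hfix, fun q hq hfixq => ?_, fun x hx n => ?_⟩
  · exact congrArg Subtype.val (hcontr.fixedPoint_unique' (x := ⟨q, hq⟩) (y := ⟨p, hp⟩)
      (Subtype.ext hfixq) (Subtype.ext hfix))
  · induction n with
    | zero => simp
    | succ n ih =>
      calc dist (f^[n + 1] x) p = dist (f (f^[n] x)) (f p) := by rw [iterate_succ_apply', hfix]
        _ ≤ c * dist (f^[n] x) p := hf _ (hsf.iterate n hx) p hp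
        _ ≤ c ^ (n + 1) * dist x p := by rw [pow_succ', mul_assoc]; gcongr

theorem pow_mul_le_of_inv_one_sub_mul_log_le {c r δ : ℝ} {t : ℕ} (hc0 : 0 ≤ c) (hc1 : c < 1)
    (hr : 0 < r) (hδ : 0 < δ) (ht : (1 - c)⁻¹ * Real.log (r / δ) ≤ t) : c ^ t * r ≤ δ := by
  have hlog : Real.log (r / δ) ≤ (1 - c) * t := (inv_mul_le_iff₀ (sub_pos.2 hc1)).1 ht
  have hpow : c ^ t ≤ Real.exp (t * (c - 1)) := by
    rw [Real.exp_nat_mul]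
    exact pow_le_pow_left₀ hc0 (by linarith [Real.add_one_le_exp (c - 1)]) t
  calc c ^ t * r ≤ Real.exp (-Real.log (r / δ)) * r := by
        gcongr
        exact hpow.trans (Real.exp_le_exp.2 (by linarith))
    _ = δ := by rw [Real.exp_neg, Real.exp_log (div_pos hr hδ)]; field_simp

theorem rdro_converges_to_stable_point_general
    {d : ℕ} (Θ : Set (EuclideanSpace ℝ (Fin d)))
    (hΘne : Θ.Nonempty) (hΘclosed : IsClosed Θ)
    {Z : Type*} [MetricSpace Z] [MeasurableSpace Z]
    (ℓ : Z → EuclideanSpace ℝ (Fin d) → ℝ)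
    (γ β ω ε : ℝ) (hγ : 0 < γ) (hβ : 0 < β) (hω : 0 < ω) (hε : 0 < ε)
    (hcontr : ω * ε < γ / β)
    (P : EuclideanSpace ℝ (Fin d) → Measure Z)
    -- (i) differentiability and γ-strong convexity on Θ of the robust objective,
    -- whose gradient is the expectation of the gradient of the loss
    (hdiff : ∀ θ ∈ Θ, Differentiable ℝ (fun ξ => ∫ z, ℓ z ξ ∂(P θ)))
    (hsc : ∀ θ ∈ Θ, ConvexOn ℝ Θ
      (fun ξ => (∫ z, ℓ z ξ ∂(P θ)) - γ / 2 * ‖ξ‖ ^ 2))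
    (hgradInt : ∀ (ξ : EuclideanSpace ℝ (Fin d)), ∀ θ ∈ Θ,
      Integrable (fun z => gradient (ℓ z) ξ) (P θ))
    (hgrad : ∀ θ ∈ Θ, ∀ ξ : EuclideanSpace ℝ (Fin d),
      gradient (fun ξ' => ∫ z, ℓ z ξ' ∂(P θ)) ξ = ∫ z, gradient (ℓ z) ξ ∂(P θ))
    -- (ii) β-joint smoothness in z
    (hsmooth : ∀ ξ ∈ Θ, ∀ z z' : Z,
      ‖gradient (ℓ z) ξ - gradient (ℓ z') ξ‖ ≤ β * dist z z')
    -- (iii) (ωε)-sensitivity in dual (Kantorovich–Rubinstein) form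
    (hsens : ∀ g : Z → ℝ, LipschitzWith 1 g → (∀ θ ∈ Θ, Integrable g (P θ)) →
      ∀ θ ∈ Θ, ∀ θ' ∈ Θ,
        |(∫ z, g z ∂(P θ)) - ∫ z, g z ∂(P θ')| ≤ ω * ε * ‖θ - θ'‖)
    -- the RDRO update operator
    (G : EuclideanSpace ℝ (Fin d) → EuclideanSpace ℝ (Fin d))
    (hGmem : ∀ θ ∈ Θ, G θ ∈ Θ)
    (hGmin : ∀ θ ∈ Θ, ∀ ξ ∈ Θ, (∫ z, ℓ z (G θ) ∂(P θ)) ≤ ∫ z, ℓ z ξ ∂(P θ)) :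
    ∃ θPS ∈ Θ, G θPS = θPS ∧
      (∀ θ' ∈ Θ, G θ' = θ' → θ' = θPS) ∧
      ∀ θ₀ ∈ Θ, θ₀ ≠ θPS → ∀ δ : ℝ, 0 < δ → ∀ t : ℕ,
        (1 - ω * ε * (β / γ))⁻¹ * Real.log (‖θ₀ - θPS‖ / δ) ≤ (t : ℝ) →
        ‖G^[t] θ₀ - θPS‖ ≤ δ := by
  set c := ω * ε * (β / γ)
  have hc0 : 0 ≤ c := by positivity
  have hc1 : c < 1 := by
    rw [lt_div_iff₀ hβ] at hcontr
    rwa [show c = ω * ε * β / γ by ring, div_lt_one hγ]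
  have hsensitive : IsDualSensitiveOn P Θ (ω * ε) := hsens
  have hcontract : ∀ θ ∈ Θ, ∀ θ' ∈ Θ, dist (G θ) (G θ') ≤ c * dist θ θ' := by
    intro θ hθ θ' hθ'
    have hgrad_sub : ∀ ξ ∈ Θ, ‖gradient (fun ξ' => ∫ z, ℓ z ξ' ∂(P θ)) ξ
        - gradient (fun ξ' => ∫ z, ℓ z ξ' ∂(P θ')) ξ‖ ≤ β * (ω * ε * ‖θ - θ'‖) := by
      intro ξ hξ
      rw [hgrad θ hθ, hgrad θ' hθ']
      exact hsensitive.norm_integral_sub_le hβ (hsmooth ξ hξ) (hgradInt ξ) hθ hθ'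
    have h := StrongConvexOn.norm_sub_le_of_isMinOn hγ
      (strongConvexOn_iff_convex.2 (hsc θ hθ)) (strongConvexOn_iff_convex.2 (hsc θ' hθ'))
      (fun ξ _ => hdiff θ hθ ξ) (fun ξ _ => hdiff θ' hθ' ξ) hgrad_sub
      (isMinOn_iff.2 (hGmin θ hθ)) (isMinOn_iff.2 (hGmin θ' hθ')) (hGmem θ hθ) (hGmem θ' hθ')
    rw [dist_eq_norm, dist_eq_norm]
    exact h.trans_eq (by ring)
  obtain ⟨θPS, hθPS, hfix, hunique, hrate⟩ := exists_isFixedPt_dist_iterate_le_of_contraction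
    hΘclosed.isComplete hΘne hGmem hc0 hc1 hcontract
  refine ⟨θPS, hθPS, hfix, hunique, fun θ₀ hθ₀ hne δ hδ t ht => ?_⟩
  rw [← dist_eq_norm] at ht ⊢
  exact (hrate θ₀ hθ₀ t).trans
    (pow_mul_le_of_inv_one_sub_mul_log_le hc0 hc1 (dist_pos.2 hne) hδ ht)

/-- Claim (2) of the paper's main theorem: if `ωε < γ/β`, repeated distributionally robust
optimization converges to a unique robustly performatively stable point at a linear rate:
`‖θ_t − θ_PS‖ ≤ δ` once `t ≥ (1 − ωεβ/γ)⁻¹ log(‖θ₀ − θ_PS‖/δ)`. -/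
theorem rdro_converges_to_stable_point
    {d : ℕ} (Θ : Set (EuclideanSpace ℝ (Fin d)))
    (hΘne : Θ.Nonempty) (hΘclosed : IsClosed Θ) (hΘconv : Convex ℝ Θ)
    {Z : Type*} [MetricSpace Z] [MeasurableSpace Z] [BorelSpace Z]
    (ℓ : Z → EuclideanSpace ℝ (Fin d) → ℝ)
    (γ β ω ε : ℝ) (hγ : 0 < γ) (hβ : 0 < β) (hω : 0 < ω) (hε : 0 < ε)
    (hcontr : ω * ε < γ / β)
    (P : EuclideanSpace ℝ (Fin d) → Measure Z)
    (hProb : ∀ θ ∈ Θ, IsProbabilityMeasure (P θ))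
    -- (i) differentiability and γ-strong convexity on Θ of the robust objective,
    -- whose gradient is the expectation of the gradient of the loss
    (hdiff : ∀ θ ∈ Θ, Differentiable ℝ (fun ξ => ∫ z, ℓ z ξ ∂(P θ)))
    (hsc : ∀ θ ∈ Θ, ConvexOn ℝ Θ
      (fun ξ => (∫ z, ℓ z ξ ∂(P θ)) - γ / 2 * ‖ξ‖ ^ 2))
    (hgradInt : ∀ (ξ : EuclideanSpace ℝ (Fin d)), ∀ θ ∈ Θ,
      Integrable (fun z => gradient (ℓ z) ξ) (P θ))
    (hgrad : ∀ θ ∈ Θ, ∀ ξ : EuclideanSpace ℝ (Fin d),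
      gradient (fun ξ' => ∫ z, ℓ z ξ' ∂(P θ)) ξ = ∫ z, gradient (ℓ z) ξ ∂(P θ))
    -- (ii) β-joint smoothness in z
    (hsmooth : ∀ ξ ∈ Θ, ∀ z z' : Z,
      ‖gradient (ℓ z) ξ - gradient (ℓ z') ξ‖ ≤ β * dist z z')
    -- (iii) (ωε)-sensitivity in dual (Kantorovich–Rubinstein) form
    (hsens : ∀ g : Z → ℝ, LipschitzWith 1 g → (∀ θ ∈ Θ, Integrable g (P θ)) →
      ∀ θ ∈ Θ, ∀ θ' ∈ Θ,
        |(∫ z, g z ∂(P θ)) - ∫ z, g z ∂(P θ')| ≤ ω * ε * ‖θ - θ'‖)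
    -- the RDRO update operator
    (G : EuclideanSpace ℝ (Fin d) → EuclideanSpace ℝ (Fin d))
    (hGmem : ∀ θ ∈ Θ, G θ ∈ Θ)
    (hGmin : ∀ θ ∈ Θ, ∀ ξ ∈ Θ, (∫ z, ℓ z (G θ) ∂(P θ)) ≤ ∫ z, ℓ z ξ ∂(P θ)) :
    ∃ θPS ∈ Θ, G θPS = θPS ∧
      (∀ θ' ∈ Θ, G θ' = θ' → θ' = θPS) ∧
      ∀ θ₀ ∈ Θ, θ₀ ≠ θPS → ∀ δ : ℝ, 0 < δ → ∀ t : ℕ,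
        (1 - ω * ε * (β / γ))⁻¹ * Real.log (‖θ₀ - θPS‖ / δ) ≤ (t : ℝ) →
        ‖G^[t] θ₀ - θPS‖ ≤ δ :=
  rdro_converges_to_stable_point_general Θ hΘne hΘclosed ℓ γ β ω ε hγ hβ hω hε hcontr P hdiff hsc
    hgradInt hgrad hsmooth hsens G hGmem hGmin
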